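/- arXiv:2510.11492 — 3 statements merged into one kernel-verified Lean document; each statement's English description precedes it below -/
import Mathlib

section
/- Let H be a complex Hilbert space and let k : H × H → ℂ be a sesquilinear form given by an absolutely convergent sum k(u,v) = ∑_j λ_j ⟨u, φ_j⟩ ⟨ψ_j, v⟩ with λ_j ≥ 0, ∑ λ_j (‖φ_j‖² + ‖ψ_j‖²) < ∞, such that k is hermitian (k(u,v) = conj(k(v,u))). Then the form K(u,v) = (1/2) ∑_j λ_j ⟨u, φ_j + ψ_j⟩ ⟨φ_j + ψ_j, v⟩ is well-defined, of positive type, and K − k is of positive type. -/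
open scoped ComplexOrder

private lemma half_nonneg' : (0:ℂ) ≤ 1/2 := by
  rw [show ((1:ℂ)/2) = ((1/2 : ℝ) : ℂ) by norm_num]
  exact_mod_cast (by norm_num : (0:ℝ) ≤ 1/2)

private lemma key_summable {H : Type*} [NormedAddCommGroup H] [InnerProductSpace ℂ H]
    (lam : ℕ → ℝ) (φ ψ : ℕ → H) (hlam : ∀ j, 0 ≤ lam j)
    (hsum : Summable fun j => lam j * (‖φ j‖ ^ 2 + ‖ψ j‖ ^ 2))
    (u v : H) (a b : ℕ → H)
    (hab : ∀ j, ‖a j‖ * ‖b j‖ ≤ 2 * (‖φ j‖ ^ 2 + ‖ψ j‖ ^ 2)) :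
    Summable fun j => (lam j : ℂ) * (inner ℂ u (a j) : ℂ) * (inner ℂ (b j) v : ℂ) := by
  have hb : ∀ j, ‖(lam j : ℂ) * (inner ℂ u (a j) : ℂ) * (inner ℂ (b j) v : ℂ)‖
      ≤ (2 * ‖u‖ * ‖v‖) * (lam j * (‖φ j‖ ^ 2 + ‖ψ j‖ ^ 2)) := by
    intro j
    have h1 : ‖(inner ℂ u (a j) : ℂ)‖ ≤ ‖u‖ * ‖a j‖ := norm_inner_le_norm _ _
    have h2 : ‖(inner ℂ (b j) v : ℂ)‖ ≤ ‖b j‖ * ‖v‖ := norm_inner_le_norm _ _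
    have hn : ‖(lam j : ℂ) * (inner ℂ u (a j) : ℂ) * (inner ℂ (b j) v : ℂ)‖
        = lam j * ‖(inner ℂ u (a j) : ℂ)‖ * ‖(inner ℂ (b j) v : ℂ)‖ := by
      rw [norm_mul, norm_mul, Complex.norm_real, Real.norm_of_nonneg (hlam j)]
    rw [hn]
    calc lam j * ‖(inner ℂ u (a j) : ℂ)‖ * ‖(inner ℂ (b j) v : ℂ)‖
        ≤ lam j * ((‖u‖ * ‖a j‖) * (‖b j‖ * ‖v‖)) := by
          rw [mul_assoc]
          exact mul_le_mul_of_nonneg_left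
            (mul_le_mul h1 h2 (norm_nonneg _) (by positivity)) (hlam j)
      _ = (‖u‖ * ‖v‖) * (lam j * (‖a j‖ * ‖b j‖)) := by ring
      _ ≤ (‖u‖ * ‖v‖) * (lam j * (2 * (‖φ j‖ ^ 2 + ‖ψ j‖ ^ 2))) := by
          exact mul_le_mul_of_nonneg_left
            (mul_le_mul_of_nonneg_left (hab j) (hlam j)) (by positivity)
      _ = (2 * ‖u‖ * ‖v‖) * (lam j * (‖φ j‖ ^ 2 + ‖ψ j‖ ^ 2)) := by ring
  exact Summable.of_norm
    (Summable.of_nonneg_of_le (fun j => norm_nonneg _) hb (hsum.mul_left _))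

private lemma pos_tsum' {H : Type*} [NormedAddCommGroup H] [InnerProductSpace ℂ H]
    (lam : ℕ → ℝ) (hlam : ∀ j, 0 ≤ lam j) (u : H) (a : ℕ → H) :
    0 ≤ ∑' j, (lam j : ℂ) * (inner ℂ u (a j) : ℂ) * (inner ℂ (a j) u : ℂ) := by
  apply tsum_nonneg
  intro j
  have h : (lam j : ℂ) * (inner ℂ u (a j) : ℂ) * (inner ℂ (a j) u : ℂ)
      = ((lam j * Complex.normSq (inner ℂ u (a j)) : ℝ) : ℂ) := by
    rw [← inner_conj_symm (a j) u, mul_assoc, Complex.mul_conj]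
    push_cast
    ring
  rw [h]
  exact_mod_cast mul_nonneg (hlam j) (Complex.normSq_nonneg _)

/-- Abstract core of the domination lemma (Lemma 2.1): a hermitian kernel given by an
absolutely convergent rank-one decomposition is dominated by the positive kernel built
from the symmetrized vectors. -/
theorem stmt0 {H : Type*} [NormedAddCommGroup H] [InnerProductSpace ℂ H] [CompleteSpace H]
    (lam : ℕ → ℝ) (φ ψ : ℕ → H)
    (hlam : ∀ j, 0 ≤ lam j)
    (hsum : Summable fun j => lam j * (‖φ j‖ ^ 2 + ‖ψ j‖ ^ 2))
    (k : H → H → ℂ)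
    (hk : ∀ u v, k u v = ∑' j, (lam j : ℂ) * (inner ℂ u (φ j) : ℂ) * (inner ℂ (ψ j) v : ℂ))
    (hherm : ∀ u v, k u v = starRingEnd ℂ (k v u)) :
    (∀ u v, Summable fun j =>
      (lam j : ℂ) * (inner ℂ u (φ j + ψ j) : ℂ) * (inner ℂ (φ j + ψ j) v : ℂ)) ∧
    (∀ u, 0 ≤ (1 / 2 : ℂ) *
      ∑' j, (lam j : ℂ) * (inner ℂ u (φ j + ψ j) : ℂ) * (inner ℂ (φ j + ψ j) u : ℂ)) ∧
    (∀ u, 0 ≤ (1 / 2 : ℂ) *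
      (∑' j, (lam j : ℂ) * (inner ℂ u (φ j + ψ j) : ℂ) * (inner ℂ (φ j + ψ j) u : ℂ)) - k u u) := by
  have hbφφ : ∀ j, ‖φ j‖ * ‖φ j‖ ≤ 2 * (‖φ j‖ ^ 2 + ‖ψ j‖ ^ 2) := by
    intro j; nlinarith [sq_nonneg (‖φ j‖), sq_nonneg (‖ψ j‖)]
  have hbψψ : ∀ j, ‖ψ j‖ * ‖ψ j‖ ≤ 2 * (‖φ j‖ ^ 2 + ‖ψ j‖ ^ 2) := by
    intro j; nlinarith [sq_nonneg (‖φ j‖), sq_nonneg (‖ψ j‖)]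
  have hbφψ : ∀ j, ‖φ j‖ * ‖ψ j‖ ≤ 2 * (‖φ j‖ ^ 2 + ‖ψ j‖ ^ 2) := by
    intro j; nlinarith [sq_nonneg (‖φ j‖ - ‖ψ j‖), sq_nonneg (‖φ j‖ + ‖ψ j‖)]
  have hbψφ : ∀ j, ‖ψ j‖ * ‖φ j‖ ≤ 2 * (‖φ j‖ ^ 2 + ‖ψ j‖ ^ 2) := by
    intro j; nlinarith [sq_nonneg (‖φ j‖ - ‖ψ j‖), sq_nonneg (‖φ j‖ + ‖ψ j‖)]
  have hbsym : ∀ j, ‖φ j + ψ j‖ * ‖φ j + ψ j‖ ≤ 2 * (‖φ j‖ ^ 2 + ‖ψ j‖ ^ 2) := by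
    intro j
    have h := norm_add_le (φ j) (ψ j)
    nlinarith [sq_nonneg (‖φ j‖ - ‖ψ j‖), norm_nonneg (φ j + ψ j), norm_nonneg (φ j),
      norm_nonneg (ψ j)]
  have hS : ∀ u v : H, Summable fun j =>
      (lam j : ℂ) * (inner ℂ u (φ j + ψ j) : ℂ) * (inner ℂ (φ j + ψ j) v : ℂ) :=
    fun u v => key_summable lam φ ψ hlam hsum u v _ _ hbsym
  refine ⟨hS, fun u => mul_nonneg half_nonneg' (pos_tsum' lam hlam u _), ?_⟩
  intro u
  have h1 := key_summable lam φ ψ hlam hsum u u φ φ hbφφ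
  have h2 := key_summable lam φ ψ hlam hsum u u ψ ψ hbψψ
  have h3 := key_summable lam φ ψ hlam hsum u u φ ψ hbφψ
  have h4 := key_summable lam φ ψ hlam hsum u u ψ φ hbψφ
  have hexp : ∀ j, (lam j : ℂ) * (inner ℂ u (φ j + ψ j) : ℂ) * (inner ℂ (φ j + ψ j) u : ℂ)
      = (lam j : ℂ) * (inner ℂ u (φ j) : ℂ) * (inner ℂ (φ j) u : ℂ)
      + (lam j : ℂ) * (inner ℂ u (ψ j) : ℂ) * (inner ℂ (ψ j) u : ℂ)
      + (lam j : ℂ) * (inner ℂ u (φ j) : ℂ) * (inner ℂ (ψ j) u : ℂ)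
      + (lam j : ℂ) * (inner ℂ u (ψ j) : ℂ) * (inner ℂ (φ j) u : ℂ) := by
    intro j
    simp only [inner_add_left, inner_add_right]
    ring
  have hsplit : (∑' j, (lam j : ℂ) * (inner ℂ u (φ j + ψ j) : ℂ) * (inner ℂ (φ j + ψ j) u : ℂ))
      = (∑' j, (lam j : ℂ) * (inner ℂ u (φ j) : ℂ) * (inner ℂ (φ j) u : ℂ))
      + (∑' j, (lam j : ℂ) * (inner ℂ u (ψ j) : ℂ) * (inner ℂ (ψ j) u : ℂ))
      + (∑' j, (lam j : ℂ) * (inner ℂ u (φ j) : ℂ) * (inner ℂ (ψ j) u : ℂ))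
      + (∑' j, (lam j : ℂ) * (inner ℂ u (ψ j) : ℂ) * (inner ℂ (φ j) u : ℂ)) := by
    rw [tsum_congr hexp, Summable.tsum_add ((h1.add h2).add h3) h4, Summable.tsum_add (h1.add h2) h3,
      Summable.tsum_add h1 h2]
  have hk3 : k u u = ∑' j, (lam j : ℂ) * (inner ℂ u (φ j) : ℂ) * (inner ℂ (ψ j) u : ℂ) := hk u u
  have hk4 : k u u = ∑' j, (lam j : ℂ) * (inner ℂ u (ψ j) : ℂ) * (inner ℂ (φ j) u : ℂ) := by
    rw [hherm u u, hk u u]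
    calc starRingEnd ℂ (∑' j, (lam j : ℂ) * (inner ℂ u (φ j) : ℂ) * (inner ℂ (ψ j) u : ℂ))
        = ∑' j, star ((lam j : ℂ) * (inner ℂ u (φ j) : ℂ) * (inner ℂ (ψ j) u : ℂ)) := tsum_star ..
      _ = ∑' j, (lam j : ℂ) * (inner ℂ u (ψ j) : ℂ) * (inner ℂ (φ j) u : ℂ) := by
          apply tsum_congr
          intro j
          simp only [star_mul', star_star, Complex.star_def, Complex.conj_ofReal,
            inner_conj_symm]
          ring
  have hkuu : k u u = (1 / 2 : ℂ) *
      ((∑' j, (lam j : ℂ) * (inner ℂ u (φ j) : ℂ) * (inner ℂ (ψ j) u : ℂ))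
        + (∑' j, (lam j : ℂ) * (inner ℂ u (ψ j) : ℂ) * (inner ℂ (φ j) u : ℂ))) := by
    rw [← hk3, ← hk4]; ring
  have heq : (1 / 2 : ℂ) *
      (∑' j, (lam j : ℂ) * (inner ℂ u (φ j + ψ j) : ℂ) * (inner ℂ (φ j + ψ j) u : ℂ)) - k u u
      = (1 / 2 : ℂ) * ((∑' j, (lam j : ℂ) * (inner ℂ u (φ j) : ℂ) * (inner ℂ (φ j) u : ℂ))
        + (∑' j, (lam j : ℂ) * (inner ℂ u (ψ j) : ℂ) * (inner ℂ (ψ j) u : ℂ))) := by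
    rw [hsplit, hkuu]; ring
  rw [heq]
  exact mul_nonneg half_nonneg' (add_nonneg (pos_tsum' lam hlam u φ) (pos_tsum' lam hlam u ψ))
end

section
/- Let K be a bounded nonnegative self-adjoint operator on a Hilbert space H. Then id − (id + K)^{-1/2} = (2/π) K ∫₀^∞ (id + K + λ²)^{-1} (id + λ²)^{-1} dλ, where the inverse square root is defined by the continuous functional calculus. -/
open MeasureTheory

lemma scalar_id {x : ℝ} (hx : 0 ≤ x) :
    (2 / Real.pi) * (x * ∫ t in Set.Ioi (0 : ℝ), (1 + x + t ^ 2)⁻¹ * (1 + t ^ 2)⁻¹) =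
      1 - (1 + x) ^ (-(1 / 2 : ℝ)) := by
  rcases hx.eq_or_lt with rfl | hx
  · simp [Real.one_rpow]
  · set a : ℝ := 1 + x with ha
    have ha1 : 1 < a := by simp [ha]; linarith
    have ha0 : 0 < a := by linarith
    set s : ℝ := Real.sqrt a with hs
    have hs0 : 0 < s := Real.sqrt_pos.mpr ha0
    have hs2 : s ^ 2 = a := Real.sq_sqrt ha0.le
    have hxne : x ≠ 0 := hx.ne'
    set G : ℝ → ℝ := fun t => x⁻¹ * (Real.arctan t - s⁻¹ * Real.arctan (t / s)) with hG
    have hderiv : ∀ t : ℝ, HasDerivAt G ((1 + x + t ^ 2)⁻¹ * (1 + t ^ 2)⁻¹) t := by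
      intro t
      have h1 : HasDerivAt Real.arctan (1 + t ^ 2)⁻¹ t := Real.hasDerivAt_arctan' t
      have h2 : HasDerivAt (fun u : ℝ => Real.arctan (u / s)) ((1 + (t / s) ^ 2)⁻¹ * s⁻¹) t := by
        have := (Real.hasDerivAt_arctan' (t / s)).comp t
          ((hasDerivAt_id t).div_const s)
        simpa [Function.comp_def] using this
      have h3 := ((h1.sub (h2.const_mul s⁻¹)).const_mul x⁻¹)
      refine HasDerivAt.congr_deriv h3 ?_
      have h1t : (0:ℝ) < 1 + t ^ 2 := by positivity
      have hat : (0:ℝ) < a + t ^ 2 := by positivity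
      have : 1 + x + t ^ 2 = a + t ^ 2 := by rw [ha]
      have hxa : x = s ^ 2 - 1 := by rw [hs2]; simp [ha]
      have hxs : s ^ 2 - 1 ≠ 0 := by rw [← hxa]; exact hxne
      rw [this, ← hs2, hxa]
      have h2t : s ^ 2 + t ^ 2 ≠ 0 := by positivity
      field_simp
      ring
    have htend : Filter.Tendsto G Filter.atTop
        (nhds (x⁻¹ * (Real.pi / 2 - s⁻¹ * (Real.pi / 2)))) := by
      have h1 : Filter.Tendsto Real.arctan Filter.atTop (nhds (Real.pi / 2)) :=
        tendsto_nhds_of_tendsto_nhdsWithin Real.tendsto_arctan_atTop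
      have h2 : Filter.Tendsto (fun t : ℝ => Real.arctan (t / s)) Filter.atTop
          (nhds (Real.pi / 2)) :=
        h1.comp (Filter.tendsto_id.atTop_div_const hs0)
      exact ((h1.sub (h2.const_mul s⁻¹)).const_mul x⁻¹)
    have hint := integral_Ioi_of_hasDerivAt_of_nonneg
      ((hderiv 0).continuousAt.continuousWithinAt)
      (fun t _ => hderiv t)
      (fun t _ => by positivity) htend
    rw [hint]
    have hG0 : G 0 = 0 := by simp [hG]
    have hrpow : (1 + x) ^ (-(1 / 2 : ℝ)) = s⁻¹ := by
      rw [← ha, Real.rpow_neg ha0.le, hs, Real.sqrt_eq_rpow]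
    rw [hrpow, hG0]
    have hpi := Real.pi_ne_zero
    field_simp
    ring

/-- Key identity of Lemma 2.2 (rootlemma):
`id − (id + K)^{-1/2} = (2/π) K ∫₀^∞ (id + K + λ²)⁻¹ (id + λ²)⁻¹ dλ`,
where the inverse square root and the resolvents are given by the continuous functional
calculus of the bounded nonnegative self-adjoint operator `K`. -/
theorem stmt2 {H : Type*} [NormedAddCommGroup H] [InnerProductSpace ℂ H] [CompleteSpace H]
    (K : H →L[ℂ] H) (hK : K.IsPositive) :
    1 - cfc (fun x : ℝ => (1 + x) ^ (-(1 / 2 : ℝ))) K =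
      (2 / Real.pi) • (K * ∫ t in Set.Ioi (0 : ℝ),
        cfc (fun x : ℝ => (1 + x + t ^ 2)⁻¹ * (1 + t ^ 2)⁻¹) K) := by
  have hsa : IsSelfAdjoint K := hK.isSelfAdjoint
  have hspec : ∀ x ∈ spectrum ℝ K, (0:ℝ) ≤ x :=
    fun x hx => spectrum_nonneg_of_nonneg ((ContinuousLinearMap.nonneg_iff_isPositive K).mpr hK) hx
  set f : ℝ → ℝ → ℝ := fun t x => (1 + x + t ^ 2)⁻¹ * (1 + t ^ 2)⁻¹ with hf
  set g : ℝ → ℝ := fun x => ∫ t in Set.Ioi (0:ℝ), f t x with hg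
  -- continuity of the two-variable restricted function
  have huncurry : Continuous (fun t : ℝ => (spectrum ℝ K).restrict (f t)).uncurry := by
    apply Continuous.mul
    · apply Continuous.inv₀
      · fun_prop
      · intro p
        have h0 := hspec _ p.2.2
        have : (0:ℝ) < 1 + (p.2 : ℝ) + p.1 ^ 2 := by positivity
        exact this.ne'
    · apply Continuous.inv₀
      · fun_prop
      · intro p
        positivity
  have hbound : ∀ t : ℝ, ∀ z ∈ spectrum ℝ K, ‖f t z‖ ≤ ‖(1 + t ^ 2)⁻¹‖ := by
    intro t z hz
    have h0 := hspec z hz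
    have h1 : (0:ℝ) < 1 + z + t ^ 2 := by positivity
    have h2 : (0:ℝ) < 1 + t ^ 2 := by positivity
    rw [Real.norm_eq_abs, Real.norm_eq_abs, abs_of_nonneg (by positivity),
      abs_of_nonneg (by positivity)]
    calc (1 + z + t ^ 2)⁻¹ * (1 + t ^ 2)⁻¹ ≤ 1 * (1 + t ^ 2)⁻¹ := by
          apply mul_le_mul_of_nonneg_right _ (by positivity)
          rw [inv_le_one_iff₀]
          right; nlinarith [sq_nonneg t]
      _ = (1 + t ^ 2)⁻¹ := one_mul _
  have hfin : HasFiniteIntegral (fun t : ℝ => (1 + t ^ 2)⁻¹)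
      (volume.restrict (Set.Ioi (0:ℝ))) :=
    (integrable_inv_one_add_sq.restrict (s := Set.Ioi 0)).hasFiniteIntegral
  have hintegral : cfc g K = ∫ t in Set.Ioi (0:ℝ), cfc (f t) K :=
    cfc_integral f (fun t => (1 + t ^ 2)⁻¹) K
      (by
        show ContinuousOn (fun p : ℝ × ℝ => (1 + p.2 + p.1 ^ 2)⁻¹ * (1 + p.1 ^ 2)⁻¹) _
        refine ContinuousOn.mul (ContinuousOn.inv₀ (by fun_prop) fun p hp => ?_)
          (ContinuousOn.inv₀ (by fun_prop) fun p _ => by positivity)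
        have h0 := hspec _ hp.2
        positivity)
      (Filter.Eventually.of_forall fun t z hz =>
        (hbound t z hz).trans_eq (Real.norm_of_nonneg (by positivity))) hfin hsa
  -- continuity of g on the spectrum
  have hgcont : ContinuousOn g (spectrum ℝ K) := by
    rw [continuousOn_iff_continuous_restrict]
    set fc : ℝ → C(spectrum ℝ K, ℝ) := fun t =>
      (ContinuousMap.curry ⟨_, huncurry⟩) t with hfc
    have fc_int : Integrable fc (volume.restrict (Set.Ioi (0:ℝ))) := by
      refine ⟨(ContinuousMap.curry ⟨_, huncurry⟩).continuous.aestronglyMeasurable, ?_⟩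
      refine hfin.mono <| Filter.Eventually.of_forall fun t => ?_
      rw [ContinuousMap.norm_le _ (norm_nonneg _)]
      exact fun z => hbound t z.1 z.2
    have : (spectrum ℝ K).restrict g = ⇑(∫ t in Set.Ioi (0:ℝ), fc t) := by
      funext z
      rw [ContinuousMap.integral_apply fc_int]
      rfl
    rw [show (spectrum ℝ K).domRestrict g = _ from this]
    exact (∫ t in Set.Ioi (0:ℝ), fc t).continuous
  have hid : ContinuousOn (fun x : ℝ => x) (spectrum ℝ K) := continuousOn_id
  rw [← hintegral]
  have hrhs : (2 / Real.pi) • (K * cfc g K)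
      = cfc (fun x : ℝ => (2 / Real.pi) • (x * g x)) K := by
    have hmul : cfc (fun x : ℝ => x * g x) K = K * cfc g K := by
      rw [cfc_mul _ _ K hid hgcont, cfc_id' ℝ K hsa]
    rw [← hmul, ← cfc_smul (2 / Real.pi) (fun x : ℝ => x * g x) K (hid.mul hgcont)]
  rw [hrhs]
  have hrt : ContinuousOn (fun x : ℝ => (1 + x) ^ (-(1 / 2 : ℝ))) (spectrum ℝ K) := by
    apply ContinuousOn.rpow_const (by fun_prop)
    intro x hx
    left
    have := hspec x hx
    positivity
  have hlhs : (1 : H →L[ℂ] H) - cfc (fun x : ℝ => (1 + x) ^ (-(1 / 2 : ℝ))) K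
      = cfc (fun x : ℝ => (1 : ℝ → ℝ) x - (1 + x) ^ (-(1 / 2 : ℝ))) K := by
    rw [cfc_sub _ _ K (by fun_prop) hrt, cfc_one (R := ℝ) K hsa]
  rw [hlhs]
  apply cfc_congr
  intro x hx
  have h0 := hspec x hx
  have := scalar_id h0
  simp only [Pi.one_apply, smul_eq_mul]
  rw [← this]
end

section
/- In the Majorana setting, suppose Γ is a skew conjugation commuting with S_adv and suppose S_adv has formal adjoint S_ret (⟨u, S_adv v⟩ = ⟨S_ret u, v⟩), and suppose S̃_F satisfies ⟨Γf, S̃_F h⟩ = −⟨Γh, S̃_F f⟩. Define W(f⊗h) = −i⟨Γf, (S̃_F − S_adv) h⟩. Then W(f⊗h) + W(h⊗f) = i⟨Γf, (S_adv − S_ret) h⟩, i.e. W satisfies the Majorana anticommutation relation. -/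
theorem pairing_skewConj_adv_eq_neg_ret {V : Type*} [AddCommGroup V] [Module ℂ V]
    (B : V → V →ₗ[ℂ] ℂ) (hherm : ∀ u v, B u v = starRingEnd ℂ (B v u))
    (Γ : V → V) (hΓinv : ∀ f, Γ (Γ f) = f) (hskewΓ : ∀ f h, B (Γ f) (Γ h) = - B h f)
    (Sadv Sret : V →ₗ[ℂ] V) (hcomm : ∀ f, Γ (Sadv f) = Sadv (Γ f))
    (hadj : ∀ u v, B u (Sadv v) = B (Sret u) v) (f h : V) :
    B (Γ h) (Sadv f) = - B (Γ f) (Sret h) := by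
  have hSadv : Sadv f = Γ (Sadv (Γ f)) := by rw [hcomm, hΓinv]
  rw [hSadv, hskewΓ, hherm (Sadv (Γ f)) h, hadj, ← hherm]

/-- Majorana anticommutation relation (final Corollary of Section 5): with
`W(f⊗h) = −i⟨Γf, (S̃_F − S_adv)h⟩` one has
`W(f⊗h) + W(h⊗f) = i⟨Γf, (S_adv − S_ret)h⟩`. -/
theorem stmt14 {V : Type*} [AddCommGroup V] [Module ℂ V]
    (B : V → V →ₗ[ℂ] ℂ)
    (hherm : ∀ u v, B u v = starRingEnd ℂ (B v u))
    (Γ : V → V)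
    (hΓinv : ∀ f, Γ (Γ f) = f)
    (hskewΓ : ∀ f h, B (Γ f) (Γ h) = - B h f)
    (Sadv Sret SFt : V →ₗ[ℂ] V)
    (hcomm : ∀ f, Γ (Sadv f) = Sadv (Γ f))
    (hadj : ∀ u v, B u (Sadv v) = B (Sret u) v)
    (hskewSF : ∀ f h, B (Γ f) (SFt h) = - B (Γ h) (SFt f))
    (W : V → V → ℂ)
    (hW : ∀ f h, W f h = (-Complex.I) * B (Γ f) ((SFt - Sadv) h)) :
    ∀ f h, W f h + W h f = Complex.I * B (Γ f) ((Sadv - Sret) h) := by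
  intro f h
  simp only [hW, LinearMap.sub_apply, map_sub]
  rw [hskewSF h f,
    pairing_skewConj_adv_eq_neg_ret B hherm Γ hΓinv hskewΓ Sadv Sret hcomm hadj f h]
  ring
end
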